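/- arXiv:1803.02655 — 2 statements merged into one kernel-verified Lean document; each statement's English description precedes it below -/
import Mathlib

section
/- Let H be a real separable Hilbert space, T > 0, and A : H → H a bounded linear operator. For any càdlàg function Z : [0,T] → H with Z(0) = 0, the function X(t) = Z(t) + ∫₀ᵗ A e^{(t−s)A} Z(s) ds is càdlàg, satisfies X(0) = 0, and solves the integral equation X(t) = A∫₀ᵗ X(s) ds + Z(t) for all t ∈ [0,T]. -/
open MeasureTheory Filter Set

/-- `f` is càdlàg on `[0, T]`: right-continuous on `[0, T)` and with left limits on `(0, T]`. -/
def Cadlag {H : Type*} [TopologicalSpace H] (T : ℝ) (f : ℝ → H) : Prop :=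
  (∀ t ∈ Set.Ico (0 : ℝ) T, Tendsto f (nhdsWithin t (Set.Ioi t)) (nhds (f t))) ∧
  (∀ t ∈ Set.Ioc (0 : ℝ) T, ∃ l, Tendsto f (nhdsWithin t (Set.Iio t)) (nhds l))

/-!
Put `φ(t) = e^{tA} ∫₀ᵗ e^{-sA} Z(s) ds = ∫₀ᵗ e^{(t-s)A} Z(s) ds`, so that `X = Z + Aφ` on `[0, T]`.
As `φ` is continuous, `X` is càdlàg. Differentiating the product, `φ` has right derivative
`Aφ + Z = X` at every point where `Z` is right-continuous, hence `∫₀ᵗ X = φ(t)` and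
`A ∫₀ᵗ X = X(t) - Z(t)`. The integrals exist because a càdlàg function is locally bounded, and
measurable as the pointwise limit on `[0, T)` of the step functions `s ↦ Z(⌈ns⌉/n)`.
-/

open Topology NormedSpace

namespace Cadlag

variable {H : Type*} {T : ℝ} {f g : ℝ → H}

theorem congr [TopologicalSpace H] (hf : Cadlag T f) (hfg : EqOn f g (Icc 0 T)) :
    Cadlag T g := by
  refine ⟨fun t ht => ?_, fun t ht => ?_⟩
  · rw [← hfg (Ico_subset_Icc_self ht)]
    exact (hf.1 t ht).congr' (eventually_of_mem (Icc_mem_nhdsGT_of_mem ht) hfg)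
  · obtain ⟨l, hl⟩ := hf.2 t ht
    exact ⟨l, hl.congr' (eventually_of_mem (Icc_mem_nhdsLT_of_mem ht) hfg)⟩

theorem add_continuousOn [TopologicalSpace H] [Add H] [ContinuousAdd H] (hf : Cadlag T f)
    (hg : ContinuousOn g (Icc 0 T)) : Cadlag T (f + g) := by
  refine ⟨fun t ht => ?_, fun t ht => ?_⟩
  · exact (hf.1 t ht).add
      ((hg t (Ico_subset_Icc_self ht)).mono_of_mem_nhdsWithin (Icc_mem_nhdsGT_of_mem ht)).tendsto
  · obtain ⟨l, hl⟩ := hf.2 t ht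
    exact ⟨l + g t, hl.add
      ((hg t (Ioc_subset_Icc_self ht)).mono_of_mem_nhdsWithin (Icc_mem_nhdsLT_of_mem ht)).tendsto⟩

variable [NormedAddCommGroup H]

theorem isBoundedUnder_norm (hf : Cadlag T f) {x : ℝ} (hx : x ∈ Icc 0 T) :
    IsBoundedUnder (· ≤ ·) (𝓝[Icc 0 T] x) (norm ∘ f) := by
  have hleft : IsBoundedUnder (· ≤ ·) (𝓝[Ico 0 x] x) (norm ∘ f) := by
    rcases hx.1.eq_or_lt with rfl | hx0
    · rw [Ico_self, nhdsWithin_empty]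
      exact (tendsto_bot : Tendsto (norm ∘ f) ⊥ (𝓝 0)).isBoundedUnder_le
    · obtain ⟨l, hl⟩ := hf.2 x ⟨hx0, hx.2⟩
      exact hl.norm.isBoundedUnder_le.mono (nhdsWithin_mono _ Ico_subset_Iio_self)
  have hright : IsBoundedUnder (· ≤ ·) (𝓝[Icc x T] x) (norm ∘ f) := by
    rcases hx.2.eq_or_lt with rfl | hxT
    · rw [Icc_self, nhdsWithin_singleton]
      exact (tendsto_pure_nhds (norm ∘ f) x).isBoundedUnder_le
    · have hcont := continuousWithinAt_Ioi_iff_Ici.1 (hf.1 x ⟨hx.1, hxT⟩)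
      exact hcont.tendsto.norm.isBoundedUnder_le.mono (nhdsWithin_mono _ Icc_subset_Ici_self)
  rw [← Ico_union_Icc_eq_Icc hx.1 hx.2, nhdsWithin_union, IsBoundedUnder, map_sup]
  exact isBounded_sup hleft hright

theorem aestronglyMeasurable (hf : Cadlag T f) :
    AEStronglyMeasurable f (volume.restrict (Icc 0 T)) := by
  have hstep : ∀ s ∈ Ico 0 T, Tendsto (fun n : ℕ => f (⌈s * n⌉₊ / n)) atTop (𝓝 (f s)) := by
    intro s hs
    have hgrid : Tendsto (fun n : ℕ => (⌈s * n⌉₊ : ℝ) / n) atTop (𝓝[≥] s) := by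
      refine tendsto_nhdsWithin_iff.2
        ⟨(tendsto_nat_ceil_mul_div_atTop hs.1).comp tendsto_natCast_atTop_atTop, ?_⟩
      filter_upwards [eventually_gt_atTop 0] with n hn
      exact (le_div_iff₀ (Nat.cast_pos (α := ℝ) |>.2 hn)).2 (Nat.le_ceil _)
    exact (continuousWithinAt_Ioi_iff_Ici.1 (hf.1 s hs)).tendsto.comp hgrid
  rw [← Measure.restrict_congr_set Ico_ae_eq_Icc]
  refine aestronglyMeasurable_of_tendsto_ae atTop (fun n => ?_)
    ((ae_restrict_mem measurableSet_Ico).mono hstep)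
  exact ((StronglyMeasurable.of_discrete (f := fun k : ℕ => f (k / n))).comp_measurable
    ((measurable_id.mul_const _).nat_ceil)).aestronglyMeasurable

theorem integrableOn_Icc (hf : Cadlag T f) : IntegrableOn f (Icc 0 T) := by
  have hloc : LocallyIntegrableOn f (Icc 0 T) := fun x hx =>
    (volume.finiteAt_nhdsWithin x _).integrableAtFilter
      ⟨Icc 0 T, self_mem_nhdsWithin, hf.aestronglyMeasurable⟩ (hf.isBoundedUnder_norm hx)
  exact hloc.integrableOn_isCompact isCompact_Icc

end Cadlag

theorem MeasureTheory.IntegrableOn.continuousOn_clm_apply {α 𝕜 E F : Type*} [TopologicalSpace α]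
    [MeasurableSpace α] [OpensMeasurableSpace α] [T2Space α] {μ : Measure α}
    [NontriviallyNormedField 𝕜] [NormedAddCommGroup E] [NormedSpace 𝕜 E] [NormedAddCommGroup F]
    [NormedSpace 𝕜 F] [SecondCountableTopologyEither α (E →L[𝕜] F)] {L : α → E →L[𝕜] F}
    {f : α → E} {K : Set α} (hf : IntegrableOn f K μ) (hL : ContinuousOn L K) (hK : IsCompact K) :
    IntegrableOn (fun x => L x (f x)) K μ := by
  obtain ⟨C, hC⟩ := hK.exists_bound_of_continuousOn hL
  refine Integrable.mono' (hf.norm.const_mul C)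
    (isBoundedBilinearMap_apply.continuous.comp_aestronglyMeasurable
      ((hL.aestronglyMeasurable hK.measurableSet).prodMk hf.1)) ?_
  filter_upwards [ae_restrict_mem hK.measurableSet] with x hx
  exact (L x).le_of_opNorm_le (hC x hx) (f x)

theorem NormedSpace.exp_add_smul {𝔸 : Type*} [NormedRing 𝔸] [NormedAlgebra ℝ 𝔸] [CompleteSpace 𝔸]
    (a : 𝔸) (s t : ℝ) : exp ((s + t) • a) = exp (s • a) * exp (t • a) := by
  let +nondep : NormedAlgebra ℚ 𝔸 := .restrictScalars ℚ ℝ 𝔸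
  rw [add_smul]
  exact exp_add_of_commute (((Commute.refl a).smul_left s).smul_right t)

theorem NormedSpace.continuous_exp_neg_smul {𝔸 : Type*} [NormedRing 𝔸] [NormedAlgebra ℝ 𝔸]
    [CompleteSpace 𝔸] (a : 𝔸) : Continuous fun s : ℝ => exp ((-s) • a) :=
  (differentiable_exp_smul_const ℝ a).continuous.comp continuous_neg

section Duhamel

variable {E : Type*} [NormedAddCommGroup E] [NormedSpace ℝ E] [CompleteSpace E]
  (A : E →L[ℝ] E) {Z : ℝ → E} {T t : ℝ}

/-- `∫₀ᵗ e^{(t-s)A} Z(s) ds`, with `e^{tA}` taken out of the integral. -/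
noncomputable def duhamelIntegral (Z : ℝ → E) (t : ℝ) : E :=
  exp (t • A) (∫ s in 0..t, exp ((-s) • A) (Z s))

theorem integral_comp_exp_sub_smul_apply {F : Type*} [NormedAddCommGroup F] [NormedSpace ℝ F]
    [CompleteSpace F] (B : E →L[ℝ] F) (hZ : IntervalIntegrable Z volume 0 t) :
    ∫ s in 0..t, (B.comp (exp ((t - s) • A))) (Z s) = B (duhamelIntegral A Z t) := by
  have hsplit : ∀ s, (B.comp (exp ((t - s) • A))) (Z s) =
      (B.comp (exp (t • A))) (exp ((-s) • A) (Z s)) := fun s => by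
    rw [sub_eq_add_neg, exp_add_smul A t (-s)]
    rfl
  simp_rw [hsplit]
  refine (B.comp (exp (t • A))).intervalIntegral_comp_comm ?_
  rw [intervalIntegrable_iff'] at hZ ⊢
  exact hZ.continuousOn_clm_apply (continuous_exp_neg_smul A).continuousOn isCompact_uIcc

theorem continuousOn_duhamelIntegral (hZ : IntegrableOn Z (Icc 0 T)) :
    ContinuousOn (duhamelIntegral A Z) (Icc 0 T) := by
  have hprim := intervalIntegral.continuousOn_primitive
    (hZ.continuousOn_clm_apply (continuous_exp_neg_smul A).continuousOn isCompact_Icc)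
  have hG : ContinuousOn (fun t => ∫ s in 0..t, exp ((-s) • A) (Z s)) (Icc 0 T) :=
    hprim.congr fun t ht => intervalIntegral.integral_of_le ht.1
  exact isBoundedBilinearMap_apply.continuous.comp_continuousOn
    ((differentiable_exp_smul_const ℝ A).continuous.continuousOn.prodMk hG)

theorem hasDerivWithinAt_duhamelIntegral (hZ : IntegrableOn Z (Icc 0 T)) {u : ℝ}
    (hu : u ∈ Ico 0 T) (hZu : ContinuousWithinAt Z (Ioi u) u) :
    HasDerivWithinAt (duhamelIntegral A Z) (A (duhamelIntegral A Z u) + Z u) (Ioi u) u := by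
  have hg : IntegrableOn (fun s => exp ((-s) • A) (Z s)) (Icc 0 T) :=
    hZ.continuousOn_clm_apply (continuous_exp_neg_smul A).continuousOn isCompact_Icc
  have hG : HasDerivWithinAt (fun t => ∫ s in 0..t, exp ((-s) • A) (Z s))
      (exp ((-u) • A) (Z u)) (Ici u) u :=
    intervalIntegral.integral_hasDerivWithinAt_right (t := Ioi u)
      ((intervalIntegrable_iff_integrableOn_Icc_of_le hu.1).2
        (hg.mono_set (Icc_subset_Icc_right hu.2.le)))
      ⟨Icc 0 T, Icc_mem_nhdsGT_of_mem hu, hg.aestronglyMeasurable⟩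
      ((continuous_exp_neg_smul A).continuousWithinAt.clm_apply hZu)
  have hinv : exp (u • A) (exp ((-u) • A) (Z u)) = Z u := by
    have h := exp_add_smul A u (-u)
    rw [add_neg_cancel, zero_smul, exp_zero] at h
    exact (DFunLike.congr_fun h (Z u)).symm
  have hφ := (hasDerivAt_exp_smul_const' A u).hasDerivWithinAt.clm_apply
    (hG.mono Ioi_subset_Ici_self)
  rw [hinv] at hφ
  exact hφ

theorem duhamelIntegral_eq_integral (hZ : IntegrableOn Z (Icc 0 T))
    (hZr : ∀ u ∈ Ico 0 T, ContinuousWithinAt Z (Ioi u) u) (ht : t ∈ Icc 0 T) :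
    duhamelIntegral A Z t = ∫ u in 0..t, (A (duhamelIntegral A Z u) + Z u) := by
  have hsub : Icc 0 t ⊆ Icc 0 T := Icc_subset_Icc_right ht.2
  have hcont := (continuousOn_duhamelIntegral A hZ).mono hsub
  have hint : IntegrableOn (fun u => A (duhamelIntegral A Z u) + Z u) (Icc 0 t) :=
    ((A.continuous.comp_continuousOn hcont).integrableOn_compact isCompact_Icc).add
      (hZ.mono_set hsub)
  rw [intervalIntegral.integral_eq_sub_of_hasDeriv_right_of_le ht.1 hcont
    (fun u hu => hasDerivWithinAt_duhamelIntegral A hZ ⟨hu.1.le, hu.2.trans_le ht.2⟩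
      (hZr u ⟨hu.1.le, hu.2.trans_le ht.2⟩))
    ((intervalIntegrable_iff_integrableOn_Icc_of_le ht.1).2 hint)]
  simp [duhamelIntegral]

end Duhamel

theorem duhamel_formula_solves_ou_general
    {H : Type*} [NormedAddCommGroup H] [InnerProductSpace ℝ H] [CompleteSpace H]
    (T : ℝ) (A : H →L[ℝ] H)
    (Z : ℝ → H) (hZ : Cadlag T Z) (hZ0 : Z 0 = 0)
    (X : ℝ → H)
    (hXdef : ∀ t, X t = Z t +
      ∫ s in (0 : ℝ)..t, (A.comp (NormedSpace.exp ((t - s) • A))) (Z s)) :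
    Cadlag T X ∧ X 0 = 0 ∧
      ∀ t ∈ Set.Icc (0 : ℝ) T, X t = A (∫ s in (0 : ℝ)..t, X s) + Z t := by
  have hZint := hZ.integrableOn_Icc
  have hX : EqOn (Z + fun t => A (duhamelIntegral A Z t)) X (Icc 0 T) := fun t ht => by
    have hZt : IntervalIntegrable Z volume 0 t :=
      (intervalIntegrable_iff_integrableOn_Icc_of_le ht.1).2
        (hZint.mono_set (Icc_subset_Icc_right ht.2))
    rw [hXdef, integral_comp_exp_sub_smul_apply A A hZt]
    rfl
  refine ⟨(hZ.add_continuousOn (A.continuous.comp_continuousOn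
    (continuousOn_duhamelIntegral A hZint))).congr hX, by simp [hXdef, hZ0], fun t ht => ?_⟩
  have hXt : EqOn X (fun u => A (duhamelIntegral A Z u) + Z u) (uIcc 0 t) := fun u hu => by
    rw [uIcc_of_le ht.1] at hu
    rw [← hX ⟨hu.1, hu.2.trans ht.2⟩, Pi.add_apply, add_comm]
  rw [intervalIntegral.integral_congr hXt, ← duhamelIntegral_eq_integral A hZint hZ.1 ht,
    ← hX ht, Pi.add_apply, add_comm]

theorem duhamel_formula_solves_ou
    {H : Type*} [NormedAddCommGroup H] [InnerProductSpace ℝ H] [CompleteSpace H]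
    [SecondCountableTopology H]
    (T : ℝ) (hT : 0 < T) (A : H →L[ℝ] H)
    (Z : ℝ → H) (hZ : Cadlag T Z) (hZ0 : Z 0 = 0)
    (X : ℝ → H)
    (hXdef : ∀ t, X t = Z t +
      ∫ s in (0 : ℝ)..t, (A.comp (NormedSpace.exp ((t - s) • A))) (Z s)) :
    Cadlag T X ∧ X 0 = 0 ∧
      ∀ t ∈ Set.Icc (0 : ℝ) T, X t = A (∫ s in (0 : ℝ)..t, X s) + Z t :=
  duhamel_formula_solves_ou_general T A Z hZ hZ0 X hXdef
end

section
/- Let H be a real separable Hilbert space, T > 0, and D_{H,T} the space of H-valued càdlàg functions on [0,T] with the cylindrical σ-algebra. For a Borel set E ⊆ H bounded below and t ∈ [0,T], the map f ↦ π_t(E, f), counting the number of s ∈ (0, t] with Δf(s) = f(s) − f(s−) ∈ E, is a measurable map from D_{H,T} to ℕ. -/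
/-!
A càdlàg path has only finitely many jumps of size at least `δ > 0` on `[0, t]`. For an open set
`A` bounded away from `0`, the path has at least `m` jumps with values in `A` if and only if, for
some open `V` with `closure V ⊆ A` and for every mesh, `m` disjoint short intervals with rational
endpoints (or endpoint `t`) carry increments in `V`: increments over intervals shrinking to a
jump converge to the jump, and limits of increments of size `≥ δ` are jumps. This is a countable
combination of cylinder events. For Borel `E ⊆ {‖x‖ ≥ ε}`, the jump values of size `> ε / 2`
form a finite counting measure on `H` that depends measurably on the path when evaluated on open
sets, hence on all Borel sets by the π-λ theorem.
-/

open MeasureTheory Filter Set Function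

/-- The space of `H`-valued càdlàg functions on `[0, T]`. -/
def CadlagSpace (H : Type*) [TopologicalSpace H] (T : ℝ) : Type _ :=
  {f : ℝ → H // Cadlag T f}

/-- The cylindrical σ-algebra on `CadlagSpace H T`: the smallest σ-algebra making all
point evaluations `f ↦ f t`, `t ∈ [0, T]`, measurable. -/
def cylSigma (H : Type*) [TopologicalSpace H] [MeasurableSpace H] (T : ℝ) :
    MeasurableSpace (CadlagSpace H T) :=
  ⨆ t ∈ Set.Icc (0 : ℝ) T, MeasurableSpace.comap (fun f => f.1 t) inferInstance

/-- `π_t(E, f)`: the number of jumps of `f` in `E` up to time `t`. -/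
noncomputable def jumpCount {H : Type*} [NormedAddCommGroup H] (E : Set H)
    (f : ℝ → H) (t : ℝ) : ℕ :=
  {s ∈ Set.Ioc (0 : ℝ) t | f s - Function.leftLim f s ∈ E}.ncard

open Topology
open scoped ENNReal

attribute [local instance] cylSigma

def jumpSet {H : Type*} [NormedAddCommGroup H] (E : Set H) (f : ℝ → H) (t : ℝ) : Set ℝ :=
  {s ∈ Ioc (0 : ℝ) t | f s - leftLim f s ∈ E}

lemma frequently_ratCast_nhdsLT (s : ℝ) : ∃ᶠ x in 𝓝[<] s, x ∈ range ((↑) : ℚ → ℝ) := by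
  refine frequently_iff.2 fun hV => ?_
  obtain ⟨a, ha, hsub⟩ := mem_nhdsLT_iff_exists_Ioo_subset.1 hV
  obtain ⟨q, hq⟩ := exists_rat_btwn (show a < s from ha)
  exact ⟨q, hsub hq, q, rfl⟩

lemma frequently_ratCast_nhdsGT (s : ℝ) : ∃ᶠ x in 𝓝[>] s, x ∈ range ((↑) : ℚ → ℝ) := by
  refine frequently_iff.2 fun hV => ?_
  obtain ⟨a, ha, hsub⟩ := mem_nhdsGT_iff_exists_Ioo_subset.1 hV
  obtain ⟨q, hq⟩ := exists_rat_btwn (show s < a from ha)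
  exact ⟨q, hsub hq, q, rfl⟩

lemma tendsto_norm_sub_comp_of_tendsto {ι E : Type*} [SeminormedAddCommGroup E]
    {g : ℝ → E} {F : Filter ℝ} {L : E} {l : Filter ι} {a b : ι → ℝ}
    (hg : Tendsto g F (𝓝 L)) (ha : Tendsto a l F) (hb : Tendsto b l F) :
    Tendsto (fun k => ‖g (b k) - g (a k)‖) l (𝓝 0) := by
  simpa using ((hg.comp hb).sub (hg.comp ha)).norm

lemma le_ncard_iff_exists_strictMono {α : Type*} [LinearOrder α] {S : Set α} (hS : S.Finite)
    (m : ℕ) : m ≤ S.ncard ↔ ∃ s : Fin m → α, StrictMono s ∧ ∀ i, s i ∈ S := by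
  rw [ncard_eq_toFinset_card S hS]
  constructor
  · intro hm
    let e := hS.toFinset.orderEmbOfFin rfl
    exact ⟨fun i => e (Fin.castLE hm i), e.strictMono.comp (Fin.strictMono_castLE hm),
      fun i => hS.mem_toFinset.1 (hS.toFinset.orderEmbOfFin_mem rfl _)⟩
  · rintro ⟨s, hs, hsS⟩
    simpa using Finset.card_le_card_of_injOn (s := Finset.univ) (t := hS.toFinset) s
      (fun i _ => hS.mem_toFinset.2 (hsS i)) hs.injective.injOn

lemma IsOpen.exists_seq_closure_subset {X : Type*} [PseudoMetricSpace X] {A : Set X}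
    (hA : IsOpen A) : ∃ V : ℕ → Set X, (∀ j, IsOpen (V j)) ∧ (∀ j, closure (V j) ⊆ A) ∧
      ∀ x ∈ A, ∀ᶠ j in atTop, x ∈ V j := by
  refine ⟨fun j => (Metric.cthickening (1 / (j + 1)) Aᶜ)ᶜ,
    fun j => Metric.isClosed_cthickening.isOpen_compl, fun j => ?_, fun x hx => ?_⟩
  · refine closure_minimal (compl_subset_compl.2 (Metric.thickening_subset_cthickening _ _))
      Metric.isOpen_thickening.isClosed_compl |>.trans ?_
    exact compl_subset_comm.1 (Metric.self_subset_thickening (by positivity) _)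
  · have hclosure : Aᶜ = ⋂ δ ∈ range fun j : ℕ => 1 / ((j : ℝ) + 1), Metric.cthickening δ Aᶜ := by
      rw [← Metric.closure_eq_iInter_cthickening', hA.isClosed_compl.closure_eq]
      intro ε hε
      obtain ⟨j, hj⟩ := exists_nat_one_div_lt hε
      exact ⟨_, ⟨j, rfl⟩, by positivity, hj.le⟩
    obtain ⟨j, hj⟩ : ∃ j : ℕ, x ∉ Metric.cthickening (1 / (j + 1)) Aᶜ := by
      by_contra! h
      exact hclosure.symm.subset (mem_iInter₂.2 fun _ ⟨j, hj⟩ => hj ▸ h j) hx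
    filter_upwards [eventually_ge_atTop j] with i hi hxi
    exact hj (Metric.cthickening_mono (one_div_le_one_div_of_le (by positivity) (by gcongr)) _ hxi)

-- `t` is included so that a jump at time `t` is seen by an interval ending exactly at `t`.
def ratTimes (t : ℝ) : Set ℝ := insert t (range ((↑) : ℚ → ℝ))

lemma countable_ratTimes (t : ℝ) : (ratTimes t).Countable :=
  (countable_range _).insert t

lemma frequently_mem_ratTimes_nhdsWithin_Icc {s t : ℝ} (hst : s ≤ t) :
    ∃ᶠ x in 𝓝[Icc s t] s, x ∈ ratTimes t := by
  rcases hst.eq_or_lt with rfl | hst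
  · simp [ratTimes, nhdsWithin_singleton]
  · refine ((frequently_ratCast_nhdsGT s).filter_mono ?_).mono fun _ => Or.inr
    rw [← nhdsWithin_Ioo_eq_nhdsGT hst]
    exact nhdsWithin_mono _ Ioo_subset_Icc_self

structure IsIntervalChain (t r : ℝ) {m : ℕ} (p q : Fin m → ℝ) : Prop where
  nonneg : ∀ i, 0 ≤ p i
  lt : ∀ i, p i < q i
  le : ∀ i, q i ≤ t
  sub_lt : ∀ i, q i - p i < r
  le_of_lt : ∀ i j, i < j → q i ≤ p j

namespace Cadlag

variable {H : Type*} [NormedAddCommGroup H] {T t s δ : ℝ} {f : ℝ → H}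

lemma tendsto_leftLim (hf : Cadlag T f) (hs : s ∈ Ioc 0 T) :
    Tendsto f (𝓝[<] s) (𝓝 (leftLim f s)) := by
  obtain ⟨l, hl⟩ := hf.2 s hs
  rwa [leftLim_eq_of_tendsto hl]

lemma tendsto_nhdsWithin_Icc (hf : Cadlag T f) (htT : t ≤ T) (hs : s ∈ Icc 0 t) :
    Tendsto f (𝓝[Icc s t] s) (𝓝 (f s)) := by
  rcases lt_or_ge s T with hsT | hTs
  · exact (continuousWithinAt_Ioi_iff_Ici.1 (hf.1 s ⟨hs.1, hsT⟩)).mono Icc_subset_Ici_self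
  · have hst : s = t := le_antisymm hs.2 (htT.trans hTs)
    subst hst
    simpa [nhdsWithin_singleton] using tendsto_pure_nhds f s

lemma eventually_norm_jump_lt {S : Set ℝ} {x : ℝ} {L : H} (hf : Cadlag T f) (hS : IsOpen S)
    (hST : S ⊆ Ioc 0 T) (hL : Tendsto f (𝓝[S] x) (𝓝 L)) (hδ : 0 < δ) :
    ∀ᶠ s in 𝓝[S] x, ‖f s - leftLim f s‖ < δ := by
  have hball : ∀ᶠ u in 𝓝[S] x, f u ∈ Metric.closedBall L (δ / 3) :=
    hL (Metric.closedBall_mem_nhds L (by positivity))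
  filter_upwards [eventually_eventually_nhdsWithin.2 hball, hball, self_mem_nhdsWithin]
    with s hnear hs hsS
  have hlim : leftLim f s ∈ Metric.closedBall L (δ / 3) :=
    Metric.isClosed_closedBall.mem_of_tendsto (hf.tendsto_leftLim (hST hsS))
      (nhdsWithin_le_nhds.trans (hS.nhdsWithin_eq hsS).ge hnear)
  rw [Metric.mem_closedBall] at hs hlim
  rw [← dist_eq_norm]
  linarith [dist_triangle_right (f s) (leftLim f s) L]

lemma eventually_nhdsNE_norm_jump_lt (hf : Cadlag T f) (htT : t ≤ T) {x : ℝ} (hx : x ∈ Icc 0 t)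
    (hδ : 0 < δ) : ∀ᶠ s in 𝓝[≠] x, s ∈ Ioc 0 t → ‖f s - leftLim f s‖ < δ := by
  rw [← nhdsLT_sup_nhdsGT, eventually_sup]
  constructor
  · rcases hx.1.eq_or_lt with rfl | hx0
    · filter_upwards [self_mem_nhdsWithin] with s hs hs' using absurd hs'.1 (not_lt.2 (le_of_lt hs))
    · have hL := hf.tendsto_leftLim ⟨hx0, hx.2.trans htT⟩
      rw [← nhdsWithin_Ioo_eq_nhdsLT hx0] at hL ⊢
      filter_upwards [hf.eventually_norm_jump_lt isOpen_Ioo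
        (fun s hs => ⟨hs.1, hs.2.le.trans (hx.2.trans htT)⟩) hL hδ] with s hs _ using hs
  · rcases (hx.2.trans htT).lt_or_eq with hxT | hxT
    · have hR := hf.1 x ⟨hx.1, hxT⟩
      rw [← nhdsWithin_Ioo_eq_nhdsGT hxT] at hR ⊢
      filter_upwards [hf.eventually_norm_jump_lt isOpen_Ioo
        (fun s hs => ⟨hx.1.trans_lt hs.1, hs.2.le⟩) hR hδ] with s hs _ using hs
    · filter_upwards [self_mem_nhdsWithin] with s hs hs'
      exact absurd (hs'.2.trans htT) (not_le.2 (hxT ▸ hs))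

/-- An accumulation point of jumps of size `≥ δ` would contradict the existence of one-sided
limits there. -/
lemma finite_jumpSet (hf : Cadlag T f) (htT : t ≤ T) (hδ : 0 < δ) {E : Set H}
    (hE : ∀ x ∈ E, δ ≤ ‖x‖) : (jumpSet E f t).Finite := by
  by_contra hinf
  obtain ⟨x, hx, hacc⟩ := Set.Infinite.exists_accPt_of_subset_isCompact hinf isCompact_Icc
    fun s hs => Ioc_subset_Icc_self hs.1
  obtain ⟨s, hs, hsmall⟩ := (accPt_iff_frequently_nhdsNE.1 hacc).and_eventually
    (hf.eventually_nhdsNE_norm_jump_lt htT hx hδ) |>.exists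
  exact (hsmall hs.1).not_ge (hE _ hs.2)

section Straddle

variable {ι : Type*} {l : Filter ι} {a b : ι → ℝ}

lemma tendsto_sub_of_straddle (hf : Cadlag T f) (htT : t ≤ T) (hs : s ∈ Ioc 0 t)
    (ha : Tendsto a l (𝓝 s)) (hb : Tendsto b l (𝓝 s))
    (hab : ∀ᶠ k in l, a k < s ∧ s ≤ b k ∧ b k ≤ t) :
    Tendsto (fun k => f (b k) - f (a k)) l (𝓝 (f s - leftLim f s)) :=
  ((hf.tendsto_nhdsWithin_Icc htT (Ioc_subset_Icc_self hs)).comp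
      (tendsto_nhdsWithin_iff.2 ⟨hb, hab.mono fun _ hk => hk.2⟩)).sub
    ((hf.tendsto_leftLim ⟨hs.1, hs.2.trans htT⟩).comp
      (tendsto_nhdsWithin_iff.2 ⟨ha, hab.mono fun _ hk => hk.1⟩))

/-- Otherwise both endpoints approach `s` from the same side, where `f` has a limit, and the
increments would tend to `0`. -/
lemma eventually_straddle (hf : Cadlag T f) (htT : t ≤ T) (hs : s ∈ Icc 0 t)
    (ha : Tendsto a l (𝓝 s)) (hb : Tendsto b l (𝓝 s))
    (hab : ∀ᶠ k in l, 0 ≤ a k ∧ a k < b k ∧ b k ≤ t) (hδ : 0 < δ)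
    (hjump : ∀ᶠ k in l, δ ≤ ‖f (b k) - f (a k)‖) :
    ∀ᶠ k in l, a k < s ∧ s ≤ b k := by
  refine ((not_frequently.1 fun hfreq => ?_).and (not_frequently.1 fun hfreq => ?_)).mono
    fun k hk => ⟨not_le.1 hk.1, not_lt.1 hk.2⟩
  · have := frequently_iff_neBot.1 hfreq
    have hab' : ∀ᶠ k in l ⊓ 𝓟 {k | s ≤ a k}, a k ∈ Icc s t ∧ b k ∈ Icc s t := by
      filter_upwards [hab.filter_mono inf_le_left, mem_inf_of_right (mem_principal_self _)]
        with k hk hsk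
      exact ⟨⟨hsk, hk.2.1.le.trans hk.2.2⟩, ⟨hsk.trans hk.2.1.le, hk.2.2⟩⟩
    have hzero := tendsto_norm_sub_comp_of_tendsto (hf.tendsto_nhdsWithin_Icc htT hs)
      (tendsto_nhdsWithin_iff.2 ⟨ha.mono_left inf_le_left, hab'.mono fun _ hk => hk.1⟩)
      (tendsto_nhdsWithin_iff.2 ⟨hb.mono_left inf_le_left, hab'.mono fun _ hk => hk.2⟩)
    linarith [ge_of_tendsto hzero (hjump.filter_mono inf_le_left)]
  · have := frequently_iff_neBot.1 hfreq
    obtain ⟨k, hbk, hk⟩ := (hfreq.and_eventually hab).exists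
    have hs0 : 0 < s := hk.1.trans_lt (hk.2.1.trans hbk)
    have hab' : ∀ᶠ k in l ⊓ 𝓟 {k | b k < s}, a k ∈ Iio s ∧ b k ∈ Iio s := by
      filter_upwards [hab.filter_mono inf_le_left, mem_inf_of_right (mem_principal_self _)]
        with k hk hbk
      exact ⟨hk.2.1.trans hbk, hbk⟩
    have hzero := tendsto_norm_sub_comp_of_tendsto (hf.tendsto_leftLim ⟨hs0, hs.2.trans htT⟩)
      (tendsto_nhdsWithin_iff.2 ⟨ha.mono_left inf_le_left, hab'.mono fun _ hk => hk.1⟩)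
      (tendsto_nhdsWithin_iff.2 ⟨hb.mono_left inf_le_left, hab'.mono fun _ hk => hk.2⟩)
    linarith [ge_of_tendsto hzero (hjump.filter_mono inf_le_left)]

end Straddle

lemma exists_increment_mem (hf : Cadlag T f) (htT : t ≤ T) {U : Set H} (hU : IsOpen U)
    (hs : s ∈ jumpSet U f t) {ρ : ℝ} (hρ : 0 < ρ) :
    ∃ p ∈ ratTimes t, ∃ q ∈ ratTimes t, 0 ≤ p ∧ s - ρ < p ∧ p < s ∧ s ≤ q ∧ q < s + ρ ∧
      q ≤ t ∧ f q - f p ∈ U := by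
  have hlim : Tendsto (fun x : ℝ × ℝ => f x.2 - f x.1) (𝓝[<] s ×ˢ 𝓝[Icc s t] s)
      (𝓝 (f s - leftLim f s)) :=
    ((hf.tendsto_nhdsWithin_Icc htT (Ioc_subset_Icc_self hs.1)).comp tendsto_snd).sub
      ((hf.tendsto_leftLim ⟨hs.1.1, hs.1.2.trans htT⟩).comp tendsto_fst)
  obtain ⟨P, hP, Q, hQ, hPQ⟩ := eventually_prod_iff.1 (hlim (hU.mem_nhds hs.2))
  have hleft : ∀ᶠ p in 𝓝[<] s, 0 < p ∧ s - ρ < p ∧ p < s :=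
    eventually_of_mem (Ioo_mem_nhdsLT (max_lt hs.1.1 (show s - ρ < s by linarith))) fun p hp =>
      ⟨(le_max_left _ _).trans_lt hp.1, (le_max_right _ _).trans_lt hp.1, hp.2⟩
  have hright : ∀ᶠ q in 𝓝[Icc s t] s, s ≤ q ∧ q < s + ρ ∧ q ≤ t := by
    filter_upwards [self_mem_nhdsWithin,
      nhdsWithin_le_nhds (Iio_mem_nhds (show s < s + ρ by linarith))]
      with q hq hq' using ⟨hq.1, hq', hq.2⟩
  obtain ⟨p, hpD, hpP, hp⟩ := ((frequently_ratCast_nhdsLT s).and_eventually (hP.and hleft)).exists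
  obtain ⟨q, hqD, hqQ, hq⟩ :=
    ((frequently_mem_ratTimes_nhdsWithin_Icc hs.1.2).and_eventually (hQ.and hright)).exists
  exact ⟨p, Or.inr hpD, q, hqD, hp.1.le, hp.2.1, hp.2.2, hq.1, hq.2.1, hq.2.2, hPQ hpP hqQ⟩

lemma exists_intervalChain (hf : Cadlag T f) (htT : t ≤ T) {U : Set H} (hU : IsOpen U) {m : ℕ}
    {s : Fin m → ℝ} (hs : StrictMono s) (hsU : ∀ i, s i ∈ jumpSet U f t) {r : ℝ} (hr : 0 < r) :
    ∃ p q : Fin m → ℝ, (∀ i, p i ∈ ratTimes t ∧ q i ∈ ratTimes t) ∧ IsIntervalChain t r p q ∧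
      ∀ i, f (q i) - f (p i) ∈ U := by
  have h2 : Tendsto (fun ρ : ℝ => 2 * ρ) (𝓝[>] 0) (𝓝 0) :=
    ((continuous_const.mul continuous_id).tendsto' 0 0 (by simp)).mono_left nhdsWithin_le_nhds
  obtain ⟨ρ, hρ, hρr, hρs⟩ := (eventually_mem_nhdsWithin.and ((h2.eventually (gt_mem_nhds hr)).and
    (eventually_all.2 fun i : Fin m => eventually_all.2 fun j : Fin m =>
      eventually_imp_distrib_left.2 fun hij =>
        h2.eventually (gt_mem_nhds (sub_pos.2 (hs hij)))))).exists
  choose p hpD q hqD hp0 hpl hps hsq hqr hqt hpqU using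
    fun i => hf.exists_increment_mem htT hU (hsU i) hρ
  refine ⟨p, q, fun i => ⟨hpD i, hqD i⟩, ⟨hp0, fun i => (hps i).trans_le (hsq i), hqt,
    fun i => by linarith [hpl i, hqr i], fun i j hij => by linarith [hqr i, hpl j, hρs i j hij]⟩,
    hpqU⟩

lemma exists_strictMono_jumpSet_of_intervalChains (hf : Cadlag T f) (htT : t ≤ T) (hδ : 0 < δ)
    {U : Set H} (hU : ∀ x ∈ U, δ ≤ ‖x‖) {m : ℕ} {p q : ℕ → Fin m → ℝ}
    (hpq : ∀ k : ℕ, IsIntervalChain t (1 / (k + 1)) (p k) (q k))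
    (hinc : ∀ k i, f (q k i) - f (p k i) ∈ U) :
    ∃ s : Fin m → ℝ, StrictMono s ∧ ∀ i, s i ∈ jumpSet (closure U) f t := by
  obtain ⟨s, hsK, φ, hφ, hp⟩ :=
    (isCompact_univ_pi fun _ : Fin m => isCompact_Icc (a := (0 : ℝ)) (b := t)).tendsto_subseq
      (x := p) fun k i _ => ⟨(hpq k).nonneg i, ((hpq k).lt i).le.trans ((hpq k).le i)⟩
  have hp' (i : Fin m) : Tendsto (fun n => p (φ n) i) atTop (𝓝 (s i)) := tendsto_pi_nhds.1 hp i
  have hq' (i : Fin m) : Tendsto (fun n => q (φ n) i) atTop (𝓝 (s i)) := by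
    have hlen : Tendsto (fun n => q (φ n) i - p (φ n) i) atTop (𝓝 0) :=
      squeeze_zero (fun n => (sub_pos.2 ((hpq _).lt i)).le) (fun n => ((hpq (φ n)).sub_lt i).le)
        (tendsto_one_div_add_atTop_nhds_zero_nat.comp hφ.tendsto_atTop)
    simpa using (hp' i).add hlen
  have hstr (i : Fin m) : ∀ᶠ n in atTop, p (φ n) i < s i ∧ s i ≤ q (φ n) i :=
    hf.eventually_straddle htT (hsK i trivial) (hp' i) (hq' i)
      (Eventually.of_forall fun n => ⟨(hpq _).nonneg i, (hpq _).lt i, (hpq _).le i⟩) hδ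
      (Eventually.of_forall fun n => hU _ (hinc _ i))
  refine ⟨s, fun i j hij => ?_, fun i => ?_⟩
  · obtain ⟨n, hi, hj⟩ := ((hstr i).and (hstr j)).exists
    exact hi.2.trans_lt (((hpq _).le_of_lt i j hij).trans_lt hj.1)
  · obtain ⟨n, hn⟩ := (hstr i).exists
    have hs : s i ∈ Ioc 0 t := ⟨((hpq _).nonneg i).trans_lt hn.1, (hsK i trivial).2⟩
    exact ⟨hs, mem_closure_of_tendsto (hf.tendsto_sub_of_straddle htT hs (hp' i) (hq' i)
      ((hstr i).mono fun n hn => ⟨hn.1, hn.2, (hpq _).le i⟩))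
      (Eventually.of_forall fun n => hinc (φ n) i)⟩

end Cadlag

section ChainEvent

variable {H : Type*} [NormedAddCommGroup H] {T t : ℝ}

def chainEvent (T t : ℝ) (U : Set H) (m : ℕ) : Set (CadlagSpace H T) :=
  ⋂ k : ℕ, ⋃ p ∈ {p : Fin m → ℝ | ∀ i, p i ∈ ratTimes t},
    ⋃ q ∈ {q : Fin m → ℝ | ∀ i, q i ∈ ratTimes t}, ⋃ (_ : IsIntervalChain t (1 / (k + 1)) p q),
      {F | ∀ i, F.1 (q i) - F.1 (p i) ∈ U}

lemma mem_chainEvent (htT : t ≤ T) {U : Set H} (hU : IsOpen U) {m : ℕ} {F : CadlagSpace H T}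
    {s : Fin m → ℝ} (hs : StrictMono s) (hsU : ∀ i, s i ∈ jumpSet U F.1 t) :
    F ∈ chainEvent T t U m := by
  refine mem_iInter.2 fun k => ?_
  obtain ⟨p, q, hD, hpq, hinc⟩ :=
    F.2.exists_intervalChain htT hU hs hsU (r := 1 / (k + 1)) (by positivity)
  exact mem_biUnion (fun i => (hD i).1) (mem_biUnion (fun i => (hD i).2) (mem_iUnion.2 ⟨hpq, hinc⟩))

lemma exists_strictMono_jumpSet_of_mem_chainEvent (htT : t ≤ T) {δ : ℝ} (hδ : 0 < δ)
    {U : Set H} (hU : ∀ x ∈ U, δ ≤ ‖x‖) {m : ℕ} {F : CadlagSpace H T}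
    (hF : F ∈ chainEvent T t U m) :
    ∃ s : Fin m → ℝ, StrictMono s ∧ ∀ i, s i ∈ jumpSet (closure U) F.1 t := by
  have (k : ℕ) : ∃ p q : Fin m → ℝ, IsIntervalChain t (1 / (k + 1)) p q ∧
      ∀ i, F.1 (q i) - F.1 (p i) ∈ U := by
    simp only [chainEvent, mem_iInter, mem_iUnion] at hF
    obtain ⟨p, -, q, -, hpq, hinc⟩ := hF k
    exact ⟨p, q, hpq, hinc⟩
  choose p q hpq hinc using this
  exact F.2.exists_strictMono_jumpSet_of_intervalChains htT hδ hU hpq hinc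

end ChainEvent

section Measurability

variable {H : Type*} [NormedAddCommGroup H] [MeasurableSpace H] {T t : ℝ}

lemma measurable_eval {s : ℝ} (hs : s ∈ Icc 0 T) :
    Measurable fun F : CadlagSpace H T => F.1 s :=
  Measurable.of_comap_le <| le_iSup₂ (f := fun u (_ : u ∈ Icc 0 T) =>
    MeasurableSpace.comap (fun F : CadlagSpace H T => F.1 u) inferInstance) s hs

lemma measurableSet_chainEvent [BorelSpace H] [SecondCountableTopology H] (htT : t ≤ T)
    {U : Set H} (hU : MeasurableSet U) (m : ℕ) : MeasurableSet (chainEvent T t U m) := by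
  refine .iInter fun k => .biUnion (countable_pi fun _ => countable_ratTimes t) fun p _ =>
    .biUnion (countable_pi fun _ => countable_ratTimes t) fun q _ => .iUnion fun hpq => ?_
  simp only [ofPred_forall]
  refine .iInter fun i => ((measurable_eval ?_).sub (measurable_eval ?_)) hU
  · exact ⟨(hpq.nonneg i).trans (hpq.lt i).le, (hpq.le i).trans htT⟩
  · exact ⟨hpq.nonneg i, (hpq.lt i).le.trans ((hpq.le i).trans htT)⟩

/-- Jumps with values in `V j` are detected by increments in `V j`, and limits of such increments
are jumps with values in `closure (V j) ⊆ A`. -/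
lemma measurableSet_le_jumpCount [BorelSpace H] [SecondCountableTopology H] (htT : t ≤ T)
    {A : Set H} (hA : IsOpen A) {δ : ℝ} (hδ : 0 < δ) (hAδ : ∀ x ∈ A, δ ≤ ‖x‖) (m : ℕ) :
    MeasurableSet {F : CadlagSpace H T | m ≤ jumpCount A F.1 t} := by
  obtain ⟨V, hVo, hVA, hAV⟩ := hA.exists_seq_closure_subset
  have hVδ (j : ℕ) : ∀ x ∈ V j, δ ≤ ‖x‖ := fun x hx => hAδ x (hVA j (subset_closure hx))
  have hEq : {F : CadlagSpace H T | m ≤ jumpCount A F.1 t} = ⋃ j, chainEvent T t (V j) m := by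
    ext F
    rw [mem_ofPred, jumpCount, ← jumpSet, le_ncard_iff_exists_strictMono
      (F.2.finite_jumpSet htT hδ hAδ), mem_iUnion]
    constructor
    · rintro ⟨s, hs, hsA⟩
      obtain ⟨j, hj⟩ := (eventually_all.2 fun i => hAV _ (hsA i).2).exists
      exact ⟨j, mem_chainEvent htT (hVo j) hs fun i => ⟨(hsA i).1, hj i⟩⟩
    · rintro ⟨j, hj⟩
      obtain ⟨s, hs, hsV⟩ := exists_strictMono_jumpSet_of_mem_chainEvent htT hδ (hVδ j) hj
      exact ⟨s, hs, fun i => ⟨(hsV i).1, hVA j (hsV i).2⟩⟩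
  rw [hEq]
  exact .iUnion fun j => measurableSet_chainEvent htT (hVo j).measurableSet m

lemma measurable_jumpCount_of_isOpen [BorelSpace H] [SecondCountableTopology H] (htT : t ≤ T)
    {A : Set H} (hA : IsOpen A) {δ : ℝ} (hδ : 0 < δ) (hAδ : ∀ x ∈ A, δ ≤ ‖x‖) :
    Measurable fun F : CadlagSpace H T => jumpCount A F.1 t :=
  measurable_of_Ici fun m => measurableSet_le_jumpCount htT hA hδ hAδ m

noncomputable def jumpMeasure (S : Set H) (f : ℝ → H) (t : ℝ) : Measure H :=
  Measure.sum fun s : jumpSet S f t => Measure.dirac (f s - leftLim f s)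

lemma jumpMeasure_apply {S B : Set H} {f : ℝ → H} (hB : MeasurableSet B) :
    jumpMeasure S f t B = (jumpSet (B ∩ S) f t).encard := by
  rw [jumpMeasure, Measure.sum_apply _ hB, ← ENNReal.tsum_set_one]
  simp_rw [Measure.dirac_apply' _ hB]
  rw [tsum_subtype (jumpSet S f t) fun s => B.indicator 1 (f s - leftLim f s),
    tsum_subtype (jumpSet (B ∩ S) f t) fun _ => (1 : ℝ≥0∞)]
  congr with s
  classical
  by_cases hS : f s - leftLim f s ∈ S <;> by_cases hB : f s - leftLim f s ∈ B <;>
    simp [jumpSet, indicator_apply, hS, hB]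

lemma jumpMeasure_apply_eq_jumpCount {S B : Set H} {f : ℝ → H} (hB : MeasurableSet B)
    (hfin : (jumpSet (B ∩ S) f t).Finite) : jumpMeasure S f t B = jumpCount (B ∩ S) f t := by
  rw [jumpMeasure_apply hB, ← hfin.cast_ncard_eq, ENat.toENNReal_coe]
  rfl

lemma measurable_jumpMeasure [BorelSpace H] [SecondCountableTopology H] (htT : t ≤ T)
    {S : Set H} (hS : IsOpen S) {δ : ℝ} (hδ : 0 < δ) (hSδ : ∀ x ∈ S, δ ≤ ‖x‖) :
    Measurable fun F : CadlagSpace H T => jumpMeasure S F.1 t := by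
  have hμ {B : Set H} (hB : MeasurableSet B) (F : CadlagSpace H T) :
      jumpMeasure S F.1 t B = jumpCount (B ∩ S) F.1 t :=
    jumpMeasure_apply_eq_jumpCount hB (F.2.finite_jumpSet htT hδ fun x hx => hSδ x hx.2)
  have (F : CadlagSpace H T) : IsFiniteMeasure (jumpMeasure S F.1 t) :=
    ⟨by simp [hμ MeasurableSet.univ]⟩
  have hopen {U : Set H} (hU : IsOpen U) :
      Measurable fun F : CadlagSpace H T => jumpMeasure S F.1 t U := by
    simp_rw [hμ hU.measurableSet]
    exact measurable_from_nat.comp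
      (measurable_jumpCount_of_isOpen htT (hU.inter hS) hδ fun x hx => hSδ x hx.2)
  exact .measure_of_isPiSystem BorelSpace.measurable_eq isPiSystem_isOpen (fun U hU => hopen hU)
    (hopen isOpen_univ)

end Measurability

theorem measurable_jumpCount_general
    {H : Type*} [NormedAddCommGroup H]
    [SecondCountableTopology H] [MeasurableSpace H] [BorelSpace H]
    (T : ℝ) (t : ℝ) (ht : t ∈ Set.Icc (0 : ℝ) T)
    (E : Set H) (hE : MeasurableSet E) (hEbdd : ∃ ε > (0 : ℝ), ∀ x ∈ E, ε ≤ ‖x‖) :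
    @Measurable (CadlagSpace H T) ℕ (cylSigma H T) _ (fun f => jumpCount E f.1 t) := by
  obtain ⟨ε, hε, hEε⟩ := hEbdd
  set S : Set H := {x | ε / 2 < ‖x‖}
  have hSε : ∀ x ∈ S, ε / 2 ≤ ‖x‖ := fun x hx => le_of_lt hx
  have hES : E ∩ S = E := inter_eq_left.2 fun x hx => by
    change ε / 2 < ‖x‖
    linarith [hEε x hx]
  have hμE (F : CadlagSpace H T) : jumpMeasure S F.1 t E = jumpCount E F.1 t := by
    rw [jumpMeasure_apply_eq_jumpCount hE (F.2.finite_jumpSet ht.2 (half_pos hε)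
      fun x hx => hSε x hx.2), hES]
  have hjump := measurable_jumpMeasure (T := T) (S := S) ht.2
    (isOpen_lt continuous_const continuous_norm) (half_pos hε) hSε
  refine (MeasurableEmbedding.natCast (α := ℝ≥0∞)).measurable_comp_iff.1 ?_
  simpa [comp_def, hμE] using (Measure.measurable_coe hE).comp hjump

theorem measurable_jumpCount
    {H : Type*} [NormedAddCommGroup H] [InnerProductSpace ℝ H] [CompleteSpace H]
    [SecondCountableTopology H] [MeasurableSpace H] [BorelSpace H]
    (T : ℝ) (hT : 0 < T) (t : ℝ) (ht : t ∈ Set.Icc (0 : ℝ) T)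
    (E : Set H) (hE : MeasurableSet E) (hEbdd : ∃ ε > (0 : ℝ), ∀ x ∈ E, ε ≤ ‖x‖) :
    @Measurable (CadlagSpace H T) ℕ (cylSigma H T) _ (fun f => jumpCount E f.1 t) :=
  measurable_jumpCount_general T t ht E hE hEbdd
end
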